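/- Compression and decompression of signed Eulerian graphs preserve the parity of the number of negative edges; if two subgraphs partition the compressed graph then their decompressions partition the original graph; and if the original graph is 2-connected then so is its compression. -/

import Mathlib

open Finset
open scoped Classical

noncomputable section

namespace SignedCircuitCover

variable {V E : Type} [Fintype V] [Fintype E] [DecidableEq V] [DecidableEq E]

/-- `e` is a loop. -/
def IsLoop (ends : E → Sym2 V) (e : E) : Prop := (ends e).IsDiag

/-- The vertices incident with an edge of `F`. -/
def support (ends : E → Sym2 V) (F : Finset E) : Finset V :=
  Finset.univ.filter fun v => ∃ e ∈ F, v ∈ ends e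

/-- Degree of `v` in the subgraph with edge set `F` (a loop counts twice). -/
def degree (ends : E → Sym2 V) (F : Finset E) (v : V) : ℕ :=
  ∑ e ∈ F, (if ends e = Sym2.diag v then 2 else if v ∈ ends e then 1 else 0)

/-- Reachability inside the edge set `F`. -/
def Reach (ends : E → Sym2 V) (F : Finset E) : V → V → Prop :=
  Relation.ReflTransGen fun a b => ∃ e ∈ F, ends e = s(a, b)

/-- The subgraph with edge set `F` is connected. -/
def ConnectedOn (ends : E → Sym2 V) (F : Finset E) : Prop :=
  ∀ u ∈ support ends F, ∀ v ∈ support ends F, Reach ends F u v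

/-- The whole graph is connected. -/
def Connected (ends : E → Sym2 V) : Prop :=
  ∀ u v : V, Reach ends (Finset.univ : Finset E) u v

/-- `F` is the edge set of a circuit (connected, 2-regular; a loop is a circuit). -/
def IsCircuit (ends : E → Sym2 V) (F : Finset E) : Prop :=
  F.Nonempty ∧ ConnectedOn ends F ∧ ∀ v ∈ support ends F, degree ends F v = 2

/-- `F` is the edge set of an Eulerian subgraph (connected, all degrees even). -/
def IsEulerianOn (ends : E → Sym2 V) (F : Finset E) : Prop :=
  ConnectedOn ends F ∧ ∀ v ∈ support ends F, Even (degree ends F v)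

/-- Negative edges of `F` (`sgn e = true` means `e` is negative). -/
def negEdges (sgn : E → Bool) (F : Finset E) : Finset E := F.filter fun e => sgn e = true

def IsBalancedCircuit (ends : E → Sym2 V) (sgn : E → Bool) (F : Finset E) : Prop :=
  IsCircuit ends F ∧ Even (negEdges sgn F).card

def IsUnbalancedCircuit (ends : E → Sym2 V) (sgn : E → Bool) (F : Finset E) : Prop :=
  IsCircuit ends F ∧ Odd (negEdges sgn F).card

/-- `P` is the edge set of a path with (distinct) end-vertices `u` and `v`. -/
def IsPath (ends : E → Sym2 V) (P : Finset E) (u v : V) : Prop :=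
  P.Nonempty ∧ ConnectedOn ends P ∧ u ≠ v ∧
    u ∈ support ends P ∧ v ∈ support ends P ∧
    degree ends P u = 1 ∧ degree ends P v = 1 ∧
    ∀ w ∈ support ends P, w ≠ u → w ≠ v → degree ends P w = 2

/-- A short barbell: two unbalanced circuits meeting at exactly one vertex. -/
def IsShortBarbell (ends : E → Sym2 V) (sgn : E → Bool) (F : Finset E) : Prop :=
  ∃ C₁ C₂ : Finset E, Disjoint C₁ C₂ ∧ F = C₁ ∪ C₂ ∧
    IsUnbalancedCircuit ends sgn C₁ ∧ IsUnbalancedCircuit ends sgn C₂ ∧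
    ∃ v : V, support ends C₁ ∩ support ends C₂ = {v}

/-- A long barbell: two disjoint unbalanced circuits joined by a path meeting
them only at its end-vertices. -/
def IsLongBarbell (ends : E → Sym2 V) (sgn : E → Bool) (F : Finset E) : Prop :=
  ∃ (C₁ C₂ P : Finset E) (u v : V),
    Disjoint C₁ C₂ ∧ Disjoint C₁ P ∧ Disjoint C₂ P ∧ F = C₁ ∪ C₂ ∪ P ∧
    IsUnbalancedCircuit ends sgn C₁ ∧ IsUnbalancedCircuit ends sgn C₂ ∧
    Disjoint (support ends C₁) (support ends C₂) ∧
    IsPath ends P u v ∧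
    support ends P ∩ support ends C₁ = {u} ∧
    support ends P ∩ support ends C₂ = {v}

def IsBarbell (ends : E → Sym2 V) (sgn : E → Bool) (F : Finset E) : Prop :=
  IsShortBarbell ends sgn F ∨ IsLongBarbell ends sgn F

/-- A signed circuit: a balanced circuit, a short barbell or a long barbell. -/
def IsSignedCircuit (ends : E → Sym2 V) (sgn : E → Bool) (F : Finset E) : Prop :=
  IsBalancedCircuit ends sgn F ∨ IsShortBarbell ends sgn F ∨ IsLongBarbell ends sgn F

/-- `e` is a bridge (cut-edge) of the subgraph with edge set `F`. -/
def IsBridgeIn (ends : E → Sym2 V) (F : Finset E) (e : E) : Prop :=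
  e ∈ F ∧ ∀ a b : V, ends e = s(a, b) → ¬ Reach ends (F.erase e) a b

/-- The bridges of the whole graph. -/
def bridges (ends : E → Sym2 V) : Finset E :=
  Finset.univ.filter fun e => IsBridgeIn ends Finset.univ e

/-- The non-bridge edges of the whole graph. -/
def nonbridges (ends : E → Sym2 V) : Finset E := Finset.univ \ bridges ends

/-- Reachability inside `F` avoiding the vertex `x`. -/
def ReachAvoid (ends : E → Sym2 V) (F : Finset E) (x : V) : V → V → Prop :=
  Relation.ReflTransGen fun a b => a ≠ x ∧ b ≠ x ∧ ∃ e ∈ F, ends e = s(a, b)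

/-- `x` is a cut-vertex of the subgraph with edge set `F`. -/
def IsCutVertexOn (ends : E → Sym2 V) (F : Finset E) (x : V) : Prop :=
  ∃ a ∈ support ends F, ∃ b ∈ support ends F,
    a ≠ x ∧ b ≠ x ∧ Reach ends F a b ∧ ¬ ReachAvoid ends F x a b

/-- The subgraph with edge set `F` is 2-connected (connected and without cut-vertices). -/
def TwoConnectedOn (ends : E → Sym2 V) (F : Finset E) : Prop :=
  ConnectedOn ends F ∧ ∀ x : V, ¬ IsCutVertexOn ends F x

/-- The whole graph is 2-connected. -/
def TwoConnected (ends : E → Sym2 V) : Prop :=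
  Connected ends ∧ ∀ x : V, ¬ IsCutVertexOn ends (Finset.univ : Finset E) x

/-- Total length of a collection of subgraphs. -/
def totalLength (𝒞 : List (Finset E)) : ℕ := (𝒞.map Finset.card).sum

/-- The width of the edge `e` with respect to the collection `𝒞`. -/
def widthAt (𝒞 : List (Finset E)) (e : E) : ℕ := (𝒞.filter fun C => e ∈ C).length

/-- `𝒞` covers every edge of the graph. -/
def CoversAll (𝒞 : List (Finset E)) : Prop := ∀ e : E, ∃ C ∈ 𝒞, e ∈ C

/-- A tree of Eulerian graphs: connected, and after deleting all bridges every
component is Eulerian (equivalently all degrees in the bridgeless part are even). -/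
def IsTreeOfEulerian (ends : E → Sym2 V) : Prop :=
  Connected ends ∧ ∀ v : V, Even (degree ends (nonbridges ends) v)

/-- Non-bridge non-loop edges. -/
def nbnl (ends : E → Sym2 V) : Finset E :=
  (nonbridges ends).filter fun e => ¬ IsLoop ends e

/-- A tree of circuits: connected, and after deleting all bridges and loops every
vertex has degree 0 or 2 (each component is an isolated vertex or a circuit). -/
def IsTreeOfCircuits (ends : E → Sym2 V) : Prop :=
  Connected ends ∧
    ∀ v : V, degree ends (nbnl ends) v = 0 ∨ degree ends (nbnl ends) v = 2

/-- The balloon containing `v`: the edge set of the component of `v` in the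
graph of non-bridge non-loop edges. -/
def compBalloon (ends : E → Sym2 V) (v : V) : Finset E :=
  (nbnl ends).filter fun e => ∃ w ∈ ends e, Reach ends (nbnl ends) v w

/-- Valency of the balloon of `v`: the number of bridges and loops incident
with its component. -/
def balloonValency (ends : E → Sym2 V) (v : V) : ℕ :=
  (Finset.univ.filter fun e =>
    (IsBridgeIn ends Finset.univ e ∨ IsLoop ends e) ∧
      ∃ w ∈ ends e, Reach ends (nbnl ends) v w).card

/-- A balloon consisting of a single negative loop. -/
def IsNegLoopBalloon (ends : E → Sym2 V) (sgn : E → Bool) (B : Finset E) : Prop :=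
  ∃ e : E, IsLoop ends e ∧ sgn e = true ∧ B = {e}

/-- A leaf balloon: a negative loop, or a nontrivial balloon of valency 1. -/
def IsLeafBalloon (ends : E → Sym2 V) (sgn : E → Bool) (B : Finset E) : Prop :=
  IsNegLoopBalloon ends sgn B ∨
    ∃ v : V, B = compBalloon ends v ∧ B.Nonempty ∧ balloonValency ends v = 1

/-- A leaf circuit: a negative loop, or a balloon of valency 1 which is a circuit. -/
def IsLeafCircuit (ends : E → Sym2 V) (sgn : E → Bool) (B : Finset E) : Prop :=
  IsNegLoopBalloon ends sgn B ∨
    ∃ v : V, B = compBalloon ends v ∧ IsCircuit ends B ∧ balloonValency ends v = 1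

/-- An inner circuit: a balloon of valency at least 2 which is a circuit. -/
def IsInnerCircuit (ends : E → Sym2 V) (B : Finset E) : Prop :=
  ∃ v : V, B = compBalloon ends v ∧ IsCircuit ends B ∧ 2 ≤ balloonValency ends v

/-- Number of unbalanced circuits of a tree of circuits: negative loops together
with the unbalanced (nontrivial) balloons. -/
def numUnbalancedCircuits (ends : E → Sym2 V) (sgn : E → Bool) : ℕ :=
  (Finset.univ.filter fun e : E => IsLoop ends e ∧ sgn e = true).card +
    Set.ncard {B : Finset E |
      (∃ v : V, B = compBalloon ends v) ∧ B.Nonempty ∧ Odd (negEdges sgn B).card}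

/-- Flow-admissibility: every edge lies in a signed circuit (Bouchet). -/
def FlowAdmissible (ends : E → Sym2 V) (sgn : E → Bool) : Prop :=
  ∀ e : E, ∃ C : Finset E, IsSignedCircuit ends sgn C ∧ e ∈ C

/-- `e` has exactly one end-vertex in `U`. -/
def crosses (ends : E → Sym2 V) (U : Finset V) (e : E) : Prop :=
  ∃ a b : V, ends e = s(a, b) ∧ ((a ∈ U ∧ b ∉ U) ∨ (a ∉ U ∧ b ∈ U))

/-- Switching the signature at the vertex set `U`. -/
def switch (ends : E → Sym2 V) (U : Finset V) (sgn : E → Bool) : E → Bool :=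
  fun e => if crosses ends U e then ! (sgn e) else sgn e

/-- The number of negative edges of a signature. -/
def negCount (sgn : E → Bool) : ℕ := (Finset.univ.filter fun e => sgn e = true).card

/-- `sgn` is a minimum signature: no equivalent (switched) signature has fewer
negative edges. -/
def IsMinSignature (ends : E → Sym2 V) (sgn : E → Bool) : Prop :=
  ∀ U : Finset V, negCount sgn ≤ negCount (switch ends U sgn)

/-- `{e₁, e₂}` is a 2-edge-cut of the subgraph with edge set `F`. -/
def IsTwoEdgeCut (ends : E → Sym2 V) (F : Finset E) (e₁ e₂ : E) : Prop :=
  e₁ ≠ e₂ ∧ e₁ ∈ F ∧ e₂ ∈ F ∧ ¬ IsBridgeIn ends F e₁ ∧ ¬ IsBridgeIn ends F e₂ ∧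
    (∀ a b : V, ends e₁ = s(a, b) → ¬ Reach ends ((F.erase e₁).erase e₂) a b) ∧
    (∀ a b : V, ends e₂ = s(a, b) → ¬ Reach ends ((F.erase e₁).erase e₂) a b)

/-- `b` is a bridge of `F` whose removal leaves two parts which are both unbalanced. -/
def SeparatesUnbalanced (ends : E → Sym2 V) (sgn : E → Bool) (F : Finset E) (b : E) : Prop :=
  IsBridgeIn ends F b ∧
    ∀ a c : V, ends b = s(a, c) →
      (∃ C ⊆ F.erase b, IsUnbalancedCircuit ends sgn C ∧
        ∃ w ∈ support ends C, Reach ends (F.erase b) a w) ∧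
      (∃ C ⊆ F.erase b, IsUnbalancedCircuit ends sgn C ∧
        ∃ w ∈ support ends C, Reach ends (F.erase b) c w)

/-- `T` is a spanning tree of the whole graph: spanning, connected and acyclic. -/
def IsSpanningTree (ends : E → Sym2 V) (T : Finset E) : Prop :=
  (∀ u v : V, Reach ends T u v) ∧ ∀ C ⊆ T, ¬ IsCircuit ends C


section Aux

variable {V E : Type} [Fintype V] [Fintype E] [DecidableEq V] [DecidableEq E]

lemma reach_of_diag (ends : E → Sym2 V) {F F' : Finset E} (hsub : F' ⊆ F)
    (hd : ∀ e ∈ F, e ∉ F' → (ends e).IsDiag) {u v : V}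
    (h : Reach ends F u v) : Reach ends F' u v := by
  induction h with
  | refl => exact Relation.ReflTransGen.refl
  | tail _ hstep ih =>
    obtain ⟨e, he, heq⟩ := hstep
    by_cases h' : e ∈ F'
    · exact ih.tail ⟨e, h', heq⟩
    · have hdg := hd e he h'
      rw [heq, Sym2.mk_isDiag_iff] at hdg
      rwa [← hdg]

lemma reachAvoid_of_diag (ends : E → Sym2 V) {F F' : Finset E} (hsub : F' ⊆ F)
    (hd : ∀ e ∈ F, e ∉ F' → (ends e).IsDiag) {x u v : V}
    (h : ReachAvoid ends F x u v) : ReachAvoid ends F' x u v := by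
  induction h with
  | refl => exact Relation.ReflTransGen.refl
  | tail _ hstep ih =>
    obtain ⟨h1, h2, e, he, heq⟩ := hstep
    by_cases h' : e ∈ F'
    · exact ih.tail ⟨h1, h2, e, h', heq⟩
    · have hdg := hd e he h'
      rw [heq, Sym2.mk_isDiag_iff] at hdg
      rwa [← hdg]

lemma reach_mono (ends : E → Sym2 V) {F F' : Finset E} (hsub : F ⊆ F') {u v : V}
    (h : Reach ends F u v) : Reach ends F' u v := by
  induction h with
  | refl => exact Relation.ReflTransGen.refl
  | tail _ hstep ih =>
    obtain ⟨e, he, heq⟩ := hstep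
    exact ih.tail ⟨e, hsub he, heq⟩

end Aux

/-- Compression and decompression preserve the parity of the number
of negative edges; decompression of a partition of the compressed graph is a
partition of the original graph; and compression preserves 2-connectivity. -/
theorem statement3 {V E : Type} [Fintype V] [Fintype E] [DecidableEq V] [DecidableEq E]
    (ends : E → Sym2 V) (sgn : E → Bool) (L : Finset E) (f : E → E)
    (heulerian : Connected ends ∧ ∀ w : V, Even (degree ends (Finset.univ : Finset E) w))
    (hnonloop : ∃ e : E, ¬ IsLoop ends e)
    (hL : ∀ e ∈ L, IsLoop ends e ∧ sgn e = true)
    (hf : ∀ e ∈ L, f e ∉ L ∧ ¬ IsLoop ends (f e) ∧ ∃ w : V, w ∈ ends e ∧ w ∈ ends (f e)) :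
    (∀ F ⊆ Finset.univ \ L,
        (negEdges (fun e => Bool.xor (sgn e) (decide (Odd (L.filter fun l => f l = e).card))) F).card % 2
          = (negEdges sgn (F ∪ L.filter fun l => f l ∈ F)).card % 2) ∧
    (∀ F₁ F₂ : Finset E, Disjoint F₁ F₂ → F₁ ∪ F₂ = Finset.univ \ L →
        Disjoint (F₁ ∪ L.filter fun l => f l ∈ F₁) (F₂ ∪ L.filter fun l => f l ∈ F₂) ∧
          (F₁ ∪ L.filter fun l => f l ∈ F₁) ∪ (F₂ ∪ L.filter fun l => f l ∈ F₂) = Finset.univ) ∧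
    (TwoConnected ends → TwoConnectedOn ends (Finset.univ \ L)) := by
  have hLloop : ∀ e ∈ L, (ends e).IsDiag := fun e he => (hL e he).1
  refine ⟨?_, ?_, ?_⟩
  · -- parity
    intro F hF
    set c : E → ℕ := fun e => (L.filter fun l => f l = e).card with hc
    have hdisjFL : Disjoint F L := by
      rw [Finset.disjoint_left]
      intro x hx hxL
      have := hF hx
      simp only [Finset.mem_sdiff] at this
      exact this.2 hxL
    -- RHS computation
    have hXsub : (L.filter fun l => f l ∈ F) ⊆ L := Finset.filter_subset _ _
    have hXneg : (L.filter fun l => f l ∈ F).filter (fun e => sgn e = true)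
        = L.filter fun l => f l ∈ F := by
      apply Finset.filter_true_of_mem
      intro e he
      exact (hL e (hXsub he)).2
    have hRHS : (negEdges sgn (F ∪ L.filter fun l => f l ∈ F)).card
        = (negEdges sgn F).card + (L.filter fun l => f l ∈ F).card := by
      rw [negEdges, Finset.filter_union, hXneg,
        Finset.card_union_of_disjoint
          (hdisjFL.mono (Finset.filter_subset _ _) hXsub)]
      rfl
    have hfiber : (L.filter fun l => f l ∈ F).card = ∑ e ∈ F, c e := by
      rw [Finset.card_eq_sum_card_fiberwise (f := f) (s := L.filter fun l => f l ∈ F) (t := F)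
        (fun l hl => (Finset.mem_filter.mp hl).2)]
      refine Finset.sum_congr rfl fun e heF => ?_
      rw [Finset.filter_filter]
      congr 1
      apply Finset.filter_congr
      intro l _
      constructor
      · exact fun h => h.2
      · intro h; exact ⟨h ▸ heF, h⟩
    have hnegF : (negEdges sgn F).card = ∑ e ∈ F, (if sgn e = true then 1 else 0) := by
      rw [negEdges, Finset.card_filter]
    have hLHS : (negEdges (fun e => Bool.xor (sgn e) (decide (Odd (c e)))) F).card
        = ∑ e ∈ F, (if Bool.xor (sgn e) (decide (Odd (c e))) = true then 1 else 0) := by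
      rw [negEdges, Finset.card_filter]
    rw [hLHS, hRHS, hnegF, hfiber, ← Finset.sum_add_distrib]
    rw [Finset.sum_nat_mod, Finset.sum_nat_mod _ 2 (fun e => _ + _)]
    congr 1
    refine Finset.sum_congr rfl fun e _ => ?_
    rcases Nat.even_or_odd (c e) with hpar | hpar
    · have hd : decide (Odd (c e)) = false := by
        simp [Nat.not_even_iff_odd, hpar]
      rw [hd]
      cases hsgn : sgn e <;>
        simp [Nat.add_mod, Nat.even_iff.mp hpar]
    · have hd : decide (Odd (c e)) = true := by simp [hpar]
      rw [hd]
      cases hsgn : sgn e <;>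
        simp [Nat.add_mod, Nat.odd_iff.mp hpar]
  · -- partition
    intro F₁ F₂ hdisj hunion
    have hF₁L : Disjoint F₁ L := by
      rw [Finset.disjoint_left]
      intro x hx hxL
      have hx1 : x ∈ F₁ ∪ F₂ := Finset.mem_union_left _ hx
      rw [hunion, Finset.mem_sdiff] at hx1
      exact hx1.2 hxL
    have hF₂L : Disjoint F₂ L := by
      rw [Finset.disjoint_left]
      intro x hx hxL
      have hx2 : x ∈ F₁ ∪ F₂ := Finset.mem_union_right _ hx
      rw [hunion, Finset.mem_sdiff] at hx2
      exact hx2.2 hxL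
    constructor
    · rw [Finset.disjoint_left]
      intro a ha hb
      rw [Finset.mem_union] at ha hb
      rcases ha with ha | ha <;> rcases hb with hb | hb
      · exact Finset.disjoint_left.mp hdisj ha hb
      · exact Finset.disjoint_left.mp hF₁L ha (Finset.filter_subset _ _ hb)
      · exact Finset.disjoint_left.mp hF₂L hb (Finset.filter_subset _ _ ha)
      · have ha' := Finset.mem_filter.mp ha
        have hb' := Finset.mem_filter.mp hb
        exact Finset.disjoint_left.mp hdisj ha'.2 hb'.2
    · apply Finset.eq_univ_of_forall
      intro e
      by_cases heL : e ∈ L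
      · have hfe : f e ∈ F₁ ∪ F₂ := by
          rw [hunion, Finset.mem_sdiff]
          exact ⟨Finset.mem_univ _, (hf e heL).1⟩
        rw [Finset.mem_union] at hfe
        rcases hfe with h | h
        · exact Finset.mem_union_left _ (Finset.mem_union_right _
            (Finset.mem_filter.mpr ⟨heL, h⟩))
        · exact Finset.mem_union_right _ (Finset.mem_union_right _
            (Finset.mem_filter.mpr ⟨heL, h⟩))
      · have he' : e ∈ F₁ ∪ F₂ := by
          rw [hunion, Finset.mem_sdiff]; exact ⟨Finset.mem_univ _, heL⟩
        rw [Finset.mem_union] at he'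
        rcases he' with h | h
        · exact Finset.mem_union_left _ (Finset.mem_union_left _ h)
        · exact Finset.mem_union_right _ (Finset.mem_union_left _ h)
  · -- 2-connectivity
    intro ⟨hconn, hcut⟩
    have hsub : (Finset.univ \ L : Finset E) ⊆ Finset.univ := Finset.sdiff_subset
    have hdiag : ∀ e ∈ (Finset.univ : Finset E), e ∉ Finset.univ \ L → (ends e).IsDiag := by
      intro e _ he
      rw [Finset.mem_sdiff] at he
      push_neg at he
      exact hLloop e (he (Finset.mem_univ e))
    constructor
    · intro u _ v _
      exact reach_of_diag ends hsub hdiag (hconn u v)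
    · intro x hx
      obtain ⟨a, ha, b, hb, hax, hbx, hr, hnr⟩ := hx
      apply hcut x
      refine ⟨a, ?_, b, ?_, hax, hbx, reach_mono ends hsub hr, ?_⟩
      · rw [support, Finset.mem_filter] at ha ⊢
        obtain ⟨_, e, he, hae⟩ := ha
        exact ⟨Finset.mem_univ _, e, Finset.mem_univ _, hae⟩
      · rw [support, Finset.mem_filter] at hb ⊢
        obtain ⟨_, e, he, hbe⟩ := hb
        exact ⟨Finset.mem_univ _, e, Finset.mem_univ _, hbe⟩
      · intro hra
        exact hnr (reachAvoid_of_diag ends hsub hdiag hra)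

end SignedCircuitCover
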